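/- For every nonzero real number λ, every positive integer m, and every real number x, the formal power series identity e_λ(t) · e_λ^x((e_λ^m(t)−1)/m) = Σ_{n≥0} d_{m,λ}(n,x) t^n/n! holds in ℝ[[t]]; that is, for every n ≥ 0 the coefficient of t^n/n! of the left-hand side equals Σ_{k=0}^{n} W_{m,λ}(n,k)(x)_{k,λ}. -/

import Mathlib

open Nat PowerSeries Finset

noncomputable section

/-- λ-falling factorial (x)_{n,λ} = x(x−λ)···(x−(n−1)λ). -/
def dfall (l x : ℝ) (n : ℕ) : ℝ := ∏ i ∈ range n, (x - i * l)

/-- degenerate exponential e_λ^x(t) = Σ (x)_{n,λ} t^n/n! as a formal power series. -/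
def degExp (l x : ℝ) : PowerSeries ℝ := PowerSeries.mk fun n => dfall l x n / n !

/-- degenerate logarithm log_λ(1+t) = Σ_{n≥1} (∏_{j=1}^{n−1}(λ−j)) t^n/n!. -/
def degLog (l : ℝ) : PowerSeries ℝ :=
  PowerSeries.mk fun n => if n = 0 then 0 else (∏ j ∈ range (n - 1), (l - (j + 1))) / n !

/-- composition Σ_k a_k f^k, valid when f has zero constant term. -/
def psComp (a : ℕ → ℝ) (f : PowerSeries ℝ) : PowerSeries ℝ :=
  PowerSeries.mk fun n => ∑ k ∈ range (n + 1), a k * PowerSeries.coeff n (f ^ k)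

/-- e_λ^x(f), the degenerate exponential composed with f (f with zero constant term). -/
def degExpComp (l x : ℝ) (f : PowerSeries ℝ) : PowerSeries ℝ :=
  psComp (fun k => dfall l x k / k !) f

/-- degenerate Stirling numbers of the second kind. -/
def dS2 (l : ℝ) (n k : ℕ) : ℝ :=
  (n ! : ℝ) / k ! * PowerSeries.coeff n ((degExp l 1 - 1) ^ k)

/-- degenerate Stirling numbers of the first kind. -/
def dS1 (l : ℝ) (n k : ℕ) : ℝ :=
  (n ! : ℝ) / k ! * PowerSeries.coeff n (degLog l ^ k)

/-- (signed) Stirling numbers of the first kind: coefficients of x(x-1)···(x-n+1). -/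
def sS1 (n k : ℕ) : ℝ := (descPochhammer ℝ n).coeff k

/-- fully degenerate Bell polynomial φ_{n,λ}(x). -/
def dBell (l : ℝ) (n : ℕ) (x : ℝ) : ℝ := ∑ k ∈ range (n + 1), dS2 l n k * dfall l x k

/-- degenerate Whitney numbers of the second kind. -/
def dW (m : ℕ) (l : ℝ) (n k : ℕ) : ℝ :=
  (n ! : ℝ) / k ! *
    PowerSeries.coeff n (degExp l 1 * ((degExp l (m : ℝ) - 1) * PowerSeries.C (R := ℝ) (1 / m)) ^ k)

/-- fully degenerate Dowling polynomial d_{m,λ}(n,x). -/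
def dDowling (m : ℕ) (l : ℝ) (n : ℕ) (x : ℝ) : ℝ :=
  ∑ k ∈ range (n + 1), dW m l n k * dfall l x k

/-- division of a power series by t (coefficient shift). -/
def divT (f : PowerSeries ℝ) : PowerSeries ℝ :=
  PowerSeries.mk fun n => PowerSeries.coeff (n + 1) f

/-- degenerate Bernoulli polynomials β_{n,λ}(x): (t/(e_λ(t)−1)) e_λ^x(t) = Σ β_{n,λ}(x) tⁿ/n!. -/
def dBernoulliPoly (l : ℝ) (n : ℕ) (x : ℝ) : ℝ :=
  (n ! : ℝ) * PowerSeries.coeff n ((divT (degExp l 1 - 1))⁻¹ * degExp l x)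

/-- the λ-falling factorial polynomial (x)_{k,λ}. -/
def dfallPoly (l : ℝ) (k : ℕ) : Polynomial ℝ :=
  ∏ i ∈ range k, (Polynomial.X - Polynomial.C (i * l))

/-- degenerate poly-Bell polynomials B^{(r)}_{n,λ}(x). -/
def dPolyBell (r : ℤ) (l : ℝ) (n : ℕ) (x : ℝ) : ℝ :=
  (n ! : ℝ) * PowerSeries.coeff n
    (divT (psComp (fun k => if k = 0 then 0 else dfall l 1 k / ((k - 1)! * (k : ℝ) ^ r))
        (degLog l)) *
      (divT (degExp l 1 - 1))⁻¹ * degExp l x)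

/-- degenerate Bernoulli polynomials of the second kind b_{n,λ}(x). -/
def dBern2 (l : ℝ) (n : ℕ) (x : ℝ) : ℝ :=
  (n ! : ℝ) *
    PowerSeries.coeff n ((divT (degLog l))⁻¹ * PowerSeries.mk fun j => dfall 1 x j / j !)

theorem constantCoeff_degExp (l x : ℝ) : constantCoeff (degExp l x) = 1 := by
  simp [degExp, dfall]

section Composition

variable {a : ℕ → ℝ} {f : PowerSeries ℝ}

theorem coeff_pow_eq_zero_of_lt (hf : constantCoeff f = 0) {j k : ℕ} (hjk : j < k) :
    coeff j (f ^ k) = 0 :=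
  coeff_of_lt_order j ((Nat.cast_lt.mpr hjk).trans_le (le_order_pow_of_constantCoeff_eq_zero k hf))

theorem coeff_psComp_of_le (hf : constantCoeff f = 0) {n N : ℕ} (hnN : n ≤ N) :
    coeff n (psComp a f) = ∑ k ∈ range (N + 1), a k * coeff n (f ^ k) := by
  rw [psComp, coeff_mk]
  refine sum_subset (range_subset_range.mpr (by omega)) fun k _ hk => ?_
  rw [coeff_pow_eq_zero_of_lt hf (by simpa using hk), mul_zero]

theorem coeff_mul_psComp (hf : constantCoeff f = 0) (g : PowerSeries ℝ) (n : ℕ) :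
    coeff n (g * psComp a f) = ∑ k ∈ range (n + 1), a k * coeff n (g * f ^ k) := by
  simp only [coeff_mul, mul_sum]
  rw [sum_comm]
  refine sum_congr rfl fun p hp => ?_
  rw [coeff_psComp_of_le hf (HasAntidiagonal.antidiagonal.snd_le hp), mul_sum]
  exact sum_congr rfl fun k _ => by ring

end Composition

theorem stmt3_general (l : ℝ) (m : ℕ) (x : ℝ) (n : ℕ) :
    (n ! : ℝ) *
        PowerSeries.coeff n
          (degExp l 1 * degExpComp l x ((degExp l (m : ℝ) - 1) * PowerSeries.C (R := ℝ) (1 / m))) =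
      dDowling m l n x := by
  rw [degExpComp, coeff_mul_psComp, mul_sum, dDowling]
  · refine sum_congr rfl fun k _ => ?_
    rw [dW]
    ring
  · simp [constantCoeff_degExp]

theorem stmt3 (l : ℝ) (hl : l ≠ 0) (m : ℕ) (hm : 0 < m) (x : ℝ) (n : ℕ) :
    (n ! : ℝ) *
        PowerSeries.coeff n
          (degExp l 1 * degExpComp l x ((degExp l (m : ℝ) - 1) * PowerSeries.C (R := ℝ) (1 / m))) =
      dDowling m l n x :=
  stmt3_general l m x n

end
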